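/- One iteration of the relocation center searching algorithm does not increase the objective: let C be a nonempty subset of V, let a : V → C assign to each point v a center a(v) ∈ C attaining min_{c ∈ C} d(c,v)·w(v), and let c' : C → V be such that for each j ∈ C, c'(j) minimizes u ↦ Σ_{v ∈ V, a(v) = j} d(u,v)·w(v) over all u ∈ V. Then the new center set C' = c'(C) (the image of c') satisfies F(C') ≤ F(C). -/

import Mathlib

/-!
Charging each point `v` to the center `c' (a v)` bounds the new cost by `∑ v, d (c' (a v)) v * w v`.
Grouping this sum by the fibers of `a`, the choice of `c' j` as a minimizer over all of `V`
(in particular against `u = j`) makes each fiber no costlier than with `j` itself, and by the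
choice of `a` the resulting sum `∑ v, d (a v) v * w v` is exactly the old cost.
-/

/-- Relocation cost `F(C) = Σ_{v ∈ V} min_{c ∈ C} d(c,v)·w(v)` for a nonempty
finite set of centers `C` in a finite set of points `V`. -/
def relocCost {V : Type*} [Fintype V] (d : V → V → ℝ) (w : V → ℝ)
    (C : Finset V) (hC : C.Nonempty) : ℝ :=
  ∑ v, C.inf' hC (fun c => d c v * w v)

open Finset

theorem Finset.sum_le_sum_of_fiberwise_le {ι κ M : Type*} [Fintype ι] [DecidableEq κ]
    [AddCommMonoid M] [PartialOrder M] [IsOrderedAddMonoid M]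
    {s : Finset κ} {a : ι → κ} (ha : ∀ i, a i ∈ s) {f g : κ → ι → M}
    (h : ∀ j ∈ s, ∑ i with a i = j, f j i ≤ ∑ i with a i = j, g j i) :
    ∑ i, f (a i) i ≤ ∑ i, g (a i) i := by
  have sum_eq_sum_fiberwise (F : κ → ι → M) :
      ∑ i, F (a i) i = ∑ j ∈ s, ∑ i with a i = j, F j i := by
    rw [← sum_fiberwise_of_maps_to fun i _ => ha i]
    refine sum_congr rfl fun j _ => sum_congr rfl fun i hi => ?_
    rw [(mem_filter.1 hi).2]
  rw [sum_eq_sum_fiberwise f, sum_eq_sum_fiberwise g]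
  exact sum_le_sum h

theorem relocCost_le_sum_of_mem {V : Type*} [Fintype V] (d : V → V → ℝ) (w : V → ℝ)
    {C : Finset V} (hC : C.Nonempty) {b : V → V} (hb : ∀ v, b v ∈ C) :
    relocCost d w C hC ≤ ∑ v, d (b v) v * w v :=
  sum_le_sum fun v _ => inf'_le _ (hb v)

theorem relocCost_iteration_le_general {V : Type*} [Fintype V] [DecidableEq V]
    (d : V → V → ℝ) (w : V → ℝ)
    (C : Finset V) (hC : C.Nonempty)
    (a : V → V) (ha : ∀ v, a v ∈ C)
    (hamin : ∀ v, d (a v) v * w v = C.inf' hC (fun c => d c v * w v))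
    (c' : V → V)
    (hc' : ∀ j ∈ C, ∀ u : V,
      ∑ v ∈ Finset.univ.filter (fun v => a v = j), d (c' j) v * w v ≤
      ∑ v ∈ Finset.univ.filter (fun v => a v = j), d u v * w v) :
    relocCost d w (C.image c') (hC.image c') ≤ relocCost d w C hC :=
  calc relocCost d w (C.image c') (hC.image c')
      ≤ ∑ v, d (c' (a v)) v * w v :=
        relocCost_le_sum_of_mem d w _ fun v => mem_image_of_mem c' (ha v)
    _ ≤ ∑ v, d (a v) v * w v :=
        sum_le_sum_of_fiberwise_le (f := fun j v => d (c' j) v * w v)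
          (g := fun j v => d j v * w v) ha fun j hj => hc' j hj j
    _ = relocCost d w C hC := sum_congr rfl fun v _ => hamin v

/-- One iteration of the relocation center searching algorithm does not
increase the objective: if `a` assigns each point to a closest (weighted)
center of `C`, and for each `j ∈ C` the new center `c' j` minimizes
`u ↦ Σ_{v : a v = j} d(u,v)·w(v)` over all `u ∈ V`, then the image
`C' = c'(C)` satisfies `F(C') ≤ F(C)`. -/
theorem relocCost_iteration_le {V : Type*} [Fintype V] [DecidableEq V] [Nonempty V]
    (d : V → V → ℝ) (w : V → ℝ)
    (C : Finset V) (hC : C.Nonempty)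
    (a : V → V) (ha : ∀ v, a v ∈ C)
    (hamin : ∀ v, d (a v) v * w v = C.inf' hC (fun c => d c v * w v))
    (c' : V → V)
    (hc' : ∀ j ∈ C, ∀ u : V,
      ∑ v ∈ Finset.univ.filter (fun v => a v = j), d (c' j) v * w v ≤
      ∑ v ∈ Finset.univ.filter (fun v => a v = j), d u v * w v) :
    relocCost d w (C.image c') (hC.image c') ≤ relocCost d w C hC :=
  relocCost_iteration_le_general d w C hC a ha hamin c' hc'
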